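/- arXiv:2010.14864 — 5 statements merged into one kernel-verified Lean document; each statement's English description precedes it below -/
import Mathlib

section
/- Let X_i, X_j, X_k be binary {1,-1}-valued variables forming a Markov chain in the order i, j, k (X_i and X_k conditionally independent given X_j). Then mindisc(P_{ik}) ≤ mindisc(P_{ij}) and mindisc(P_{ik}) ≤ mindisc(P_{jk}). In particular, |P_{i|k}(1|1) - P_{i|k}(1|-1)| = |P_{i|j}(1|1) - P_{i|j}(1|-1)| · |P_{j|k}(1|1) - P_{j|k}(1|-1)|. -/
/-- Pairwise marginal of `(X_i,X_j)` of a joint distribution on `Bool³`. -/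
noncomputable def pairIJ (P : Bool → Bool → Bool → ℝ) (x y : Bool) : ℝ := ∑ z : Bool, P x y z

/-- Pairwise marginal of `(X_i,X_k)`. -/
noncomputable def pairIK (P : Bool → Bool → Bool → ℝ) (x z : Bool) : ℝ := ∑ y : Bool, P x y z

/-- Pairwise marginal of `(X_j,X_k)`. -/
noncomputable def pairJK (P : Bool → Bool → Bool → ℝ) (y z : Bool) : ℝ := ∑ x : Bool, P x y z

/-- Marginal of `X_i`. -/
noncomputable def margI3 (P : Bool → Bool → Bool → ℝ) (x : Bool) : ℝ :=
  ∑ y : Bool, ∑ z : Bool, P x y z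

/-- Marginal of `X_j`. -/
noncomputable def margJ3 (P : Bool → Bool → Bool → ℝ) (y : Bool) : ℝ :=
  ∑ x : Bool, ∑ z : Bool, P x y z

/-- Marginal of `X_k`. -/
noncomputable def margK3 (P : Bool → Bool → Bool → ℝ) (z : Bool) : ℝ :=
  ∑ x : Bool, ∑ y : Bool, P x y z

/-- `P` is a Markov chain in the order `i, j, k`: `X_i` and `X_k` are conditionally
independent given `X_j` (stated multiplicatively so it makes sense even when some
conditioning event has probability zero). -/
def IsMarkovIJK (P : Bool → Bool → Bool → ℝ) : Prop :=
  ∀ x y z, P x y z * margJ3 P y = pairIJ P x y * pairJK P y z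

/-- First marginal of a pairwise distribution on `Bool × Bool`. -/
noncomputable def marg1 (Q : Bool → Bool → ℝ) (a : Bool) : ℝ := ∑ b : Bool, Q a b

/-- Second marginal of a pairwise distribution on `Bool × Bool`. -/
noncomputable def marg2 (Q : Bool → Bool → ℝ) (b : Bool) : ℝ := ∑ a : Bool, Q a b

/-- `mindisc` of a pairwise distribution: the smaller of the two conditional-probability
discrepancies. -/
noncomputable def mindisc (Q : Bool → Bool → ℝ) : ℝ :=
  min |Q true true / marg2 Q true - Q true false / marg2 Q false|
      |Q true true / marg1 Q true - Q false true / marg1 Q false|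

/-- `mindiag` of a pairwise distribution: the smaller of the probabilities of agreement
and disagreement. -/
noncomputable def mindiag (Q : Bool → Bool → ℝ) : ℝ :=
  min (Q true true + Q false false) (Q true false + Q false true)

/-- `I_{H²}` of a pairwise distribution: its squared Hellinger distance from the product
of its marginals. -/
noncomputable def ih2 (Q : Bool → Bool → ℝ) : ℝ :=
  1 - ∑ a : Bool, ∑ b : Bool, Real.sqrt (marg1 Q a * marg2 Q b * Q a b)

private lemma key_alg (A1 A2 B1 B2 B1' B2' M1 M2 N1 N2 : ℝ)
    (hM1 : M1 ≠ 0) (hM2 : M2 ≠ 0) (hN1 : N1 ≠ 0) (hN2 : N2 ≠ 0)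
    (h1 : B1 + B2 = N1) (h2 : B1' + B2' = N2) :
    (A1 * B1 / M1 + A2 * B2 / M2) / N1 - (A1 * B1' / M1 + A2 * B2' / M2) / N2
      = (A1 / M1 - A2 / M2) * (B1 / N1 - B1' / N2) := by
  subst h1 h2
  field_simp
  ring

private lemma abs_div_sub_div_le_one (a b c d : ℝ) (ha : 0 ≤ a) (hab : a ≤ b) (hb : 0 < b)
    (hc : 0 ≤ c) (hcd : c ≤ d) (hd : 0 < d) : |a / b - c / d| ≤ 1 := by
  have h1 : a / b ≤ 1 := (div_le_one hb).2 hab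
  have h2 : 0 ≤ a / b := div_nonneg ha hb.le
  have h3 : c / d ≤ 1 := (div_le_one hd).2 hcd
  have h4 : 0 ≤ c / d := div_nonneg hc hd.le
  rw [abs_le]; constructor <;> linarith

/-- `mindisc` is monotone along a Markov chain, and the conditional discrepancy of the
endpoint pair is the product of the discrepancies of the consecutive pairs. -/
theorem mindisc_markov (P : Bool → Bool → Bool → ℝ)
    (hnn : ∀ x y z, 0 ≤ P x y z)
    (hsum : ∑ x : Bool, ∑ y : Bool, ∑ z : Bool, P x y z = 1)
    (hmarkov : IsMarkovIJK P)
    (hI : ∀ x, 0 < margI3 P x) (hJ : ∀ y, 0 < margJ3 P y) (hK : ∀ z, 0 < margK3 P z) :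
    mindisc (pairIK P) ≤ mindisc (pairIJ P) ∧
    mindisc (pairIK P) ≤ mindisc (pairJK P) ∧
    |pairIK P true true / margK3 P true - pairIK P true false / margK3 P false|
      = |pairIJ P true true / margJ3 P true - pairIJ P true false / margJ3 P false|
        * |pairJK P true true / margK3 P true - pairJK P true false / margK3 P false| := by

  have hJt := (hJ true).ne'
  have hJf := (hJ false).ne'
  have hIt := (hI true).ne'
  have hIf := (hI false).ne'
  have hKt := (hK true).ne'
  have hKf := (hK false).ne'
  -- decomposition of P via Markov property
  have hPdec : ∀ x y z, P x y z = pairIJ P x y * pairJK P y z / margJ3 P y := by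
    intro x y z
    rw [eq_div_iff (hJ y).ne']
    exact hmarkov x y z
  have hIK : ∀ x z, pairIK P x z =
      pairIJ P x true * pairJK P true z / margJ3 P true
        + pairIJ P x false * pairJK P false z / margJ3 P false := by
    intro x z
    rw [pairIK, Fintype.sum_bool, hPdec, hPdec]
  -- marginal consistency identities
  have hbK : ∀ z, pairJK P true z + pairJK P false z = margK3 P z := by
    intro z; simp [pairJK, margK3, Fintype.sum_bool] <;> ring
  have haI : ∀ x, pairIJ P x true + pairIJ P x false = margI3 P x := by
    intro x; simp [pairIJ, margI3, Fintype.sum_bool]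
  have haJ : ∀ y, pairIJ P true y + pairIJ P false y = margJ3 P y := by
    intro y; simp [pairIJ, margJ3, Fintype.sum_bool] <;> ring
  have hbJ : ∀ y, pairJK P y true + pairJK P y false = margJ3 P y := by
    intro y; simp [pairJK, margJ3, Fintype.sum_bool] <;> ring
  -- marginals of the pair distributions
  have hm1IK : ∀ x, marg1 (pairIK P) x = margI3 P x := by
    intro x; simp [marg1, pairIK, margI3, Fintype.sum_bool] <;> ring
  have hm2IK : ∀ z, marg2 (pairIK P) z = margK3 P z := by
    intro z; simp [marg2, pairIK, margK3, Fintype.sum_bool]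
  have hm1IJ : ∀ x, marg1 (pairIJ P) x = margI3 P x := by
    intro x; simp [marg1, pairIJ, margI3, Fintype.sum_bool]
  have hm2IJ : ∀ y, marg2 (pairIJ P) y = margJ3 P y := by
    intro y; simp [marg2, pairIJ, margJ3, Fintype.sum_bool] <;> ring
  have hm1JK : ∀ y, marg1 (pairJK P) y = margJ3 P y := by
    intro y; simp [marg1, pairJK, margJ3, Fintype.sum_bool] <;> ring
  have hm2JK : ∀ z, marg2 (pairJK P) z = margK3 P z := by
    intro z; simp [marg2, pairJK, margK3, Fintype.sum_bool] <;> ring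
  -- nonnegativity of pair marginals
  have hann : ∀ x y, 0 ≤ pairIJ P x y := by
    intro x y; rw [pairIJ, Fintype.sum_bool]
    have := hnn x y true; have := hnn x y false; linarith
  have hbnn : ∀ y z, 0 ≤ pairJK P y z := by
    intro y z; rw [pairJK, Fintype.sum_bool]
    have := hnn true y z; have := hnn false y z; linarith
  -- key product identities
  have hD : pairIK P true true / margK3 P true - pairIK P true false / margK3 P false
      = (pairIJ P true true / margJ3 P true - pairIJ P true false / margJ3 P false)
        * (pairJK P true true / margK3 P true - pairJK P true false / margK3 P false) := by
    rw [hIK, hIK]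
    exact key_alg _ _ _ _ _ _ _ _ _ _ hJt hJf hKt hKf (hbK true) (hbK false)
  have hE : pairIK P true true / margI3 P true - pairIK P false true / margI3 P false
      = (pairJK P true true / margJ3 P true - pairJK P false true / margJ3 P false)
        * (pairIJ P true true / margI3 P true - pairIJ P false true / margI3 P false) := by
    rw [hIK, hIK]
    linear_combination key_alg (pairJK P true true) (pairJK P false true)
      (pairIJ P true true) (pairIJ P true false) (pairIJ P false true) (pairIJ P false false)
      (margJ3 P true) (margJ3 P false) (margI3 P true) (margI3 P false)
      hJt hJf hIt hIf (haI true) (haI false)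
  -- bounds
  have hDjk1 : |pairJK P true true / margK3 P true - pairJK P true false / margK3 P false| ≤ 1 := by
    refine abs_div_sub_div_le_one _ _ _ _ (hbnn _ _) ?_ (hK true) (hbnn _ _) ?_ (hK false)
    · have := hbK true; have := hbnn false true; linarith
    · have := hbK false; have := hbnn false false; linarith
  have hDij1 : |pairIJ P true true / margJ3 P true - pairIJ P true false / margJ3 P false| ≤ 1 := by
    refine abs_div_sub_div_le_one _ _ _ _ (hann _ _) ?_ (hJ true) (hann _ _) ?_ (hJ false)
    · have := haJ true; have := hann false true; linarith
    · have := haJ false; have := hann false false; linarith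
  have hEjk1 : |pairJK P true true / margJ3 P true - pairJK P false true / margJ3 P false| ≤ 1 := by
    refine abs_div_sub_div_le_one _ _ _ _ (hbnn _ _) ?_ (hJ true) (hbnn _ _) ?_ (hJ false)
    · have := hbJ true; have := hbnn true false; linarith
    · have := hbJ false; have := hbnn false false; linarith
  have hEij1 : |pairIJ P true true / margI3 P true - pairIJ P false true / margI3 P false| ≤ 1 := by
    refine abs_div_sub_div_le_one _ _ _ _ (hann _ _) ?_ (hI true) (hann _ _) ?_ (hI false)
    · have := haI true; have := hann true false; linarith
    · have := haI false; have := hann false false; linarith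
  refine ⟨?_, ?_, ?_⟩
  · rw [mindisc, mindisc, hm1IK, hm1IK, hm2IK, hm2IK, hm1IJ, hm1IJ, hm2IJ, hm2IJ]
    refine min_le_min ?_ ?_
    · rw [hD, abs_mul]
      calc |pairIJ P true true / margJ3 P true - pairIJ P true false / margJ3 P false|
            * |pairJK P true true / margK3 P true - pairJK P true false / margK3 P false|
          ≤ |pairIJ P true true / margJ3 P true - pairIJ P true false / margJ3 P false| * 1 := by
            gcongr
        _ = _ := mul_one _
    · rw [hE, abs_mul]
      calc |pairJK P true true / margJ3 P true - pairJK P false true / margJ3 P false|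
            * |pairIJ P true true / margI3 P true - pairIJ P false true / margI3 P false|
          ≤ 1 * |pairIJ P true true / margI3 P true - pairIJ P false true / margI3 P false| := by
            gcongr
        _ = _ := one_mul _
  · rw [mindisc, mindisc, hm1IK, hm1IK, hm2IK, hm2IK, hm1JK, hm1JK, hm2JK, hm2JK]
    refine min_le_min ?_ ?_
    · rw [hD, abs_mul]
      calc |pairIJ P true true / margJ3 P true - pairIJ P true false / margJ3 P false|
            * |pairJK P true true / margK3 P true - pairJK P true false / margK3 P false|
          ≤ 1 * |pairJK P true true / margK3 P true - pairJK P true false / margK3 P false| := by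
            gcongr
        _ = _ := one_mul _
    · rw [hE, abs_mul]
      calc |pairJK P true true / margJ3 P true - pairJK P false true / margJ3 P false|
            * |pairIJ P true true / margI3 P true - pairIJ P false true / margI3 P false|
          ≤ |pairJK P true true / margJ3 P true - pairJK P false true / margJ3 P false| * 1 := by
            gcongr
        _ = _ := mul_one _
  · rw [hD, abs_mul]
end

section
/- Let X_i, X_j, X_k be binary {1,-1}-valued variables forming a Markov chain in the order i, j, k. Then I_{H²}(P_{ij}) ≥ I_{H²}(P_{ik}) and I_{H²}(P_{jk}) ≥ I_{H²}(P_{ik}). -/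
section Aux

lemma cs2 {a b c d : ℝ} (ha : 0 ≤ a) (hb : 0 ≤ b) (hc : 0 ≤ c) (hd : 0 ≤ d) :
    Real.sqrt (a*c) + Real.sqrt (b*d) ≤ Real.sqrt ((a+b)*(c+d)) := by
  rw [show (a+b)*(c+d) = a*c + (a*d + b*c) + b*d by ring]
  have hac := Real.sq_sqrt (mul_nonneg ha hc)
  have hbd := Real.sq_sqrt (mul_nonneg hb hd)
  have hmul : Real.sqrt (a*c) * Real.sqrt (b*d) = Real.sqrt (a*d) * Real.sqrt (b*c) := by
    rw [← Real.sqrt_mul (mul_nonneg ha hc), ← Real.sqrt_mul (mul_nonneg ha hd)]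
    ring_nf
  have h2 : 2 * (Real.sqrt (a*d) * Real.sqrt (b*c)) ≤ a*d + b*c := by
    nlinarith [sq_nonneg (Real.sqrt (a*d) - Real.sqrt (b*c)),
      Real.sq_sqrt (mul_nonneg ha hd), Real.sq_sqrt (mul_nonneg hb hc)]
  have hnn : 0 ≤ Real.sqrt (a*c) + Real.sqrt (b*d) := by positivity
  have hrhs : (0:ℝ) ≤ a*c + (a*d + b*c) + b*d := by
    nlinarith [mul_nonneg ha hc, mul_nonneg ha hd, mul_nonneg hb hc, mul_nonneg hb hd]
  apply (Real.le_sqrt hnn hrhs).mpr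
  nlinarith [Real.sqrt_nonneg (a*c), Real.sqrt_nonneg (b*d)]

lemma keyid {c j1 j2 p1 p2 : ℝ} (hc : 0 ≤ c) (hj1 : 0 ≤ j1) (hj2 : 0 ≤ j2)
    (hp1 : 0 ≤ p1) (hp2 : 0 ≤ p2)
    (h1 : p1 * (j1 + j2) = c * j1) (h2 : p2 * (j1 + j2) = c * j2) :
    Real.sqrt (j1 * p1) + Real.sqrt (j2 * p2) = Real.sqrt (c * (j1 + j2)) := by
  rcases eq_or_lt_of_le (add_nonneg hj1 hj2) with hJ | hJ
  · have e1 : j1 = 0 := by linarith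
    have e2 : j2 = 0 := by linarith
    simp [e1, e2]
  · have hs : Real.sqrt (j1+j2) ≠ 0 := by positivity
    have e1 : Real.sqrt (j1 * p1) * Real.sqrt (j1 + j2) = Real.sqrt c * j1 := by
      rw [← Real.sqrt_mul (mul_nonneg hj1 hp1),
        show j1 * p1 * (j1+j2) = c * (j1*j1) by linear_combination j1 * h1,
        Real.sqrt_mul hc, Real.sqrt_mul_self hj1]
    have e2 : Real.sqrt (j2 * p2) * Real.sqrt (j1 + j2) = Real.sqrt c * j2 := by
      rw [← Real.sqrt_mul (mul_nonneg hj2 hp2),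
        show j2 * p2 * (j1+j2) = c * (j2*j2) by linear_combination j2 * h2,
        Real.sqrt_mul hc, Real.sqrt_mul_self hj2]
    apply mul_right_cancel₀ hs
    rw [add_mul, e1, e2, Real.sqrt_mul hc]
    calc Real.sqrt c * j1 + Real.sqrt c * j2 = Real.sqrt c * (j1+j2) := by ring
      _ = Real.sqrt c * (Real.sqrt (j1+j2) * Real.sqrt (j1+j2)) := by
          rw [Real.mul_self_sqrt hJ.le]
      _ = Real.sqrt c * Real.sqrt (j1+j2) * Real.sqrt (j1+j2) := by ring

end Aux

section Marg

variable (P : Bool → Bool → Bool → ℝ)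

lemma pairIJ_eq (x y : Bool) : pairIJ P x y = P x y true + P x y false := by
  simp [pairIJ]

lemma pairIK_eq (x z : Bool) : pairIK P x z = P x true z + P x false z := by
  simp [pairIK]

lemma pairJK_eq (y z : Bool) : pairJK P y z = P true y z + P false y z := by
  simp [pairJK]

lemma margJ3_eq_jk (y : Bool) : margJ3 P y = pairJK P y true + pairJK P y false := by
  simp [margJ3, pairJK]; try ring

lemma margJ3_eq_ij (y : Bool) : margJ3 P y = pairIJ P true y + pairIJ P false y := by
  simp [margJ3, pairIJ]; try ring

lemma margI3_eq_ij (x : Bool) : margI3 P x = pairIJ P x true + pairIJ P x false := by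
  simp [margI3, pairIJ]; try ring

lemma margI3_eq_ik (x : Bool) : margI3 P x = pairIK P x true + pairIK P x false := by
  simp [margI3, pairIK]; try ring

lemma margK3_eq_jk (z : Bool) : margK3 P z = pairJK P true z + pairJK P false z := by
  simp [margK3, pairJK]; try ring

lemma margK3_eq_ik (z : Bool) : margK3 P z = pairIK P true z + pairIK P false z := by
  simp [margK3, pairIK]; try ring

lemma marg1_pairIJ (x : Bool) : marg1 (pairIJ P) x = margI3 P x := by
  simp [marg1, pairIJ, margI3]

lemma marg2_pairIJ (y : Bool) : marg2 (pairIJ P) y = margJ3 P y := by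
  simp [marg2, pairIJ, margJ3]; try ring

lemma marg1_pairIK (x : Bool) : marg1 (pairIK P) x = margI3 P x := by
  simp [marg1, pairIK, margI3]; try ring

lemma marg2_pairIK (z : Bool) : marg2 (pairIK P) z = margK3 P z := by
  simp [marg2, pairIK, margK3]; try ring

lemma marg1_pairJK (y : Bool) : marg1 (pairJK P) y = margJ3 P y := by
  simp [marg1, pairJK, margJ3]; try ring

lemma marg2_pairJK (z : Bool) : marg2 (pairJK P) z = margK3 P z := by
  simp [marg2, pairJK, margK3]; try ring

lemma pairIJ_nonneg (hnn : ∀ x y z, 0 ≤ P x y z) (x y : Bool) : 0 ≤ pairIJ P x y := by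
  rw [pairIJ_eq]; have := hnn x y true; have := hnn x y false; linarith

lemma pairIK_nonneg (hnn : ∀ x y z, 0 ≤ P x y z) (x z : Bool) : 0 ≤ pairIK P x z := by
  rw [pairIK_eq]; have := hnn x true z; have := hnn x false z; linarith

lemma pairJK_nonneg (hnn : ∀ x y z, 0 ≤ P x y z) (y z : Bool) : 0 ≤ pairJK P y z := by
  rw [pairJK_eq]; have := hnn true y z; have := hnn false y z; linarith

lemma margI3_nonneg (hnn : ∀ x y z, 0 ≤ P x y z) (x : Bool) : 0 ≤ margI3 P x := by
  rw [margI3_eq_ij]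
  have := pairIJ_nonneg P hnn x true; have := pairIJ_nonneg P hnn x false; linarith

lemma margJ3_nonneg (hnn : ∀ x y z, 0 ≤ P x y z) (y : Bool) : 0 ≤ margJ3 P y := by
  rw [margJ3_eq_jk]
  have := pairJK_nonneg P hnn y true; have := pairJK_nonneg P hnn y false; linarith

lemma margK3_nonneg (hnn : ∀ x y z, 0 ≤ P x y z) (z : Bool) : 0 ≤ margK3 P z := by
  rw [margK3_eq_jk]
  have := pairJK_nonneg P hnn true z; have := pairJK_nonneg P hnn false z; linarith

end Marg

section Rows

variable (P : Bool → Bool → Bool → ℝ)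

/-- For each `y`: `∑_z √(pairJK y z * P x y z) = √(pairIJ x y * margJ3 y)`. -/
lemma groupY (hnn : ∀ x y z, 0 ≤ P x y z) (hmarkov : IsMarkovIJK P) (x y : Bool) :
    Real.sqrt (pairJK P y true * P x y true) + Real.sqrt (pairJK P y false * P x y false)
      = Real.sqrt (pairIJ P x y * margJ3 P y) := by
  rw [margJ3_eq_jk]
  refine keyid (pairIJ_nonneg P hnn x y) (pairJK_nonneg P hnn y true)
    (pairJK_nonneg P hnn y false) (hnn x y true) (hnn x y false) ?_ ?_
  · rw [← margJ3_eq_jk]; exact hmarkov x y true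
  · rw [← margJ3_eq_jk]; exact hmarkov x y false

/-- For each `y`: `∑_x √(pairIJ x y * P x y z) = √(pairJK y z * margJ3 y)`. -/
lemma groupY' (hnn : ∀ x y z, 0 ≤ P x y z) (hmarkov : IsMarkovIJK P) (y z : Bool) :
    Real.sqrt (pairIJ P true y * P true y z) + Real.sqrt (pairIJ P false y * P false y z)
      = Real.sqrt (pairJK P y z * margJ3 P y) := by
  rw [margJ3_eq_ij]
  refine keyid (pairJK_nonneg P hnn y z) (pairIJ_nonneg P hnn true y)
    (pairIJ_nonneg P hnn false y) (hnn true y z) (hnn false y z) ?_ ?_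
  · rw [← margJ3_eq_ij]; linear_combination hmarkov true y z
  · rw [← margJ3_eq_ij]; linear_combination hmarkov false y z

lemma rowIJ (hnn : ∀ x y z, 0 ≤ P x y z) (hmarkov : IsMarkovIJK P) (x : Bool) :
    Real.sqrt (margI3 P x * margJ3 P true * pairIJ P x true)
      + Real.sqrt (margI3 P x * margJ3 P false * pairIJ P x false)
    ≤ Real.sqrt (margI3 P x * margK3 P true * pairIK P x true)
      + Real.sqrt (margI3 P x * margK3 P false * pairIK P x false) := by
  have hI := margI3_nonneg P hnn x
  have hsI := Real.sqrt_nonneg (margI3 P x)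
  have e : ∀ y : Bool, Real.sqrt (margI3 P x * margJ3 P y * pairIJ P x y)
      = Real.sqrt (margI3 P x) * Real.sqrt (pairIJ P x y * margJ3 P y) := by
    intro y
    rw [show margI3 P x * margJ3 P y * pairIJ P x y
        = margI3 P x * (pairIJ P x y * margJ3 P y) by ring, Real.sqrt_mul hI]
  have e' : ∀ z : Bool, Real.sqrt (margI3 P x * margK3 P z * pairIK P x z)
      = Real.sqrt (margI3 P x) * Real.sqrt (margK3 P z * pairIK P x z) := by
    intro z
    rw [show margI3 P x * margK3 P z * pairIK P x z
        = margI3 P x * (margK3 P z * pairIK P x z) by ring, Real.sqrt_mul hI]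
  have hz : ∀ z : Bool,
      Real.sqrt (pairJK P true z * P x true z) + Real.sqrt (pairJK P false z * P x false z)
      ≤ Real.sqrt (margK3 P z * pairIK P x z) := by
    intro z
    rw [margK3_eq_jk, pairIK_eq]
    exact cs2 (pairJK_nonneg P hnn true z) (pairJK_nonneg P hnn false z)
      (hnn x true z) (hnn x false z)
  calc Real.sqrt (margI3 P x * margJ3 P true * pairIJ P x true)
      + Real.sqrt (margI3 P x * margJ3 P false * pairIJ P x false)
      = Real.sqrt (margI3 P x) * (Real.sqrt (pairIJ P x true * margJ3 P true)
          + Real.sqrt (pairIJ P x false * margJ3 P false)) := by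
        rw [e true, e false]; try ring
    _ = Real.sqrt (margI3 P x) *
        ((Real.sqrt (pairJK P true true * P x true true)
            + Real.sqrt (pairJK P false true * P x false true))
          + (Real.sqrt (pairJK P true false * P x true false)
            + Real.sqrt (pairJK P false false * P x false false))) := by
        rw [← groupY P hnn hmarkov x true, ← groupY P hnn hmarkov x false]; try ring
    _ ≤ Real.sqrt (margI3 P x) *
        (Real.sqrt (margK3 P true * pairIK P x true)
          + Real.sqrt (margK3 P false * pairIK P x false)) := by
        apply mul_le_mul_of_nonneg_left _ hsI
        exact add_le_add (hz true) (hz false)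
    _ = Real.sqrt (margI3 P x * margK3 P true * pairIK P x true)
      + Real.sqrt (margI3 P x * margK3 P false * pairIK P x false) := by
        rw [e' true, e' false]; try ring

lemma rowJK (hnn : ∀ x y z, 0 ≤ P x y z) (hmarkov : IsMarkovIJK P) (z : Bool) :
    Real.sqrt (margJ3 P true * margK3 P z * pairJK P true z)
      + Real.sqrt (margJ3 P false * margK3 P z * pairJK P false z)
    ≤ Real.sqrt (margI3 P true * margK3 P z * pairIK P true z)
      + Real.sqrt (margI3 P false * margK3 P z * pairIK P false z) := by
  have hK := margK3_nonneg P hnn z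
  have hsK := Real.sqrt_nonneg (margK3 P z)
  have e : ∀ y : Bool, Real.sqrt (margJ3 P y * margK3 P z * pairJK P y z)
      = Real.sqrt (margK3 P z) * Real.sqrt (pairJK P y z * margJ3 P y) := by
    intro y
    rw [show margJ3 P y * margK3 P z * pairJK P y z
        = margK3 P z * (pairJK P y z * margJ3 P y) by ring, Real.sqrt_mul hK]
  have e' : ∀ x : Bool, Real.sqrt (margI3 P x * margK3 P z * pairIK P x z)
      = Real.sqrt (margK3 P z) * Real.sqrt (margI3 P x * pairIK P x z) := by
    intro x
    rw [show margI3 P x * margK3 P z * pairIK P x z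
        = margK3 P z * (margI3 P x * pairIK P x z) by ring, Real.sqrt_mul hK]
  have hx : ∀ x : Bool,
      Real.sqrt (pairIJ P x true * P x true z) + Real.sqrt (pairIJ P x false * P x false z)
      ≤ Real.sqrt (margI3 P x * pairIK P x z) := by
    intro x
    rw [margI3_eq_ij, pairIK_eq]
    exact cs2 (pairIJ_nonneg P hnn x true) (pairIJ_nonneg P hnn x false)
      (hnn x true z) (hnn x false z)
  calc Real.sqrt (margJ3 P true * margK3 P z * pairJK P true z)
      + Real.sqrt (margJ3 P false * margK3 P z * pairJK P false z)
      = Real.sqrt (margK3 P z) * (Real.sqrt (pairJK P true z * margJ3 P true)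
          + Real.sqrt (pairJK P false z * margJ3 P false)) := by
        rw [e true, e false]; try ring
    _ = Real.sqrt (margK3 P z) *
        ((Real.sqrt (pairIJ P true true * P true true z)
            + Real.sqrt (pairIJ P true false * P true false z))
          + (Real.sqrt (pairIJ P false true * P false true z)
            + Real.sqrt (pairIJ P false false * P false false z))) := by
        rw [← groupY' P hnn hmarkov true z, ← groupY' P hnn hmarkov false z]; try ring
    _ ≤ Real.sqrt (margK3 P z) *
        (Real.sqrt (margI3 P true * pairIK P true z)
          + Real.sqrt (margI3 P false * pairIK P false z)) := by
        apply mul_le_mul_of_nonneg_left _ hsK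
        exact add_le_add (hx true) (hx false)
    _ = Real.sqrt (margI3 P true * margK3 P z * pairIK P true z)
      + Real.sqrt (margI3 P false * margK3 P z * pairIK P false z) := by
        rw [e' true, e' false]; try ring

end Rows

/-- `I_{H²}` is monotone along a Markov chain: closer pairs are at least as far from
independence in squared Hellinger distance. -/
theorem ih2_markov_monotone (P : Bool → Bool → Bool → ℝ)
    (hnn : ∀ x y z, 0 ≤ P x y z)
    (hsum : ∑ x : Bool, ∑ y : Bool, ∑ z : Bool, P x y z = 1)
    (hmarkov : IsMarkovIJK P) :
    ih2 (pairIK P) ≤ ih2 (pairIJ P) ∧ ih2 (pairIK P) ≤ ih2 (pairJK P) := by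
  constructor
  · unfold ih2
    apply sub_le_sub_left
    simp only [marg1_pairIJ, marg2_pairIJ, marg1_pairIK, marg2_pairIK, Fintype.sum_bool]
    exact add_le_add (rowIJ P hnn hmarkov true) (rowIJ P hnn hmarkov false)
  · unfold ih2
    apply sub_le_sub_left
    simp only [marg1_pairJK, marg2_pairJK, marg1_pairIK, marg2_pairIK, Fintype.sum_bool]
    have h1 := rowJK P hnn hmarkov true
    have h2 := rowJK P hnn hmarkov false
    linarith
end

section
/- Let X_i, X_j, X_k be binary {1,-1}-valued variables forming a Markov chain in the order i, j, k, with all marginal events having positive probability. Then minmrg(P_j) ≥ minmrg(P_{ik}) · mindisc(P_{ik}). -/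
/-- Along a Markov chain `i, j, k`, the middle node's minimum marginal probability is at
least `minmrg(P_{ik}) · mindisc(P_{ik})`. -/
theorem minmrg_middle_ge (P : Bool → Bool → Bool → ℝ)
    (hnn : ∀ x y z, 0 ≤ P x y z)
    (hsum : ∑ x : Bool, ∑ y : Bool, ∑ z : Bool, P x y z = 1)
    (hmarkov : IsMarkovIJK P)
    (hI : ∀ x, 0 < margI3 P x) (hJ : ∀ y, 0 < margJ3 P y) (hK : ∀ z, 0 < margK3 P z) :
    min (min (margI3 P true) (margI3 P false)) (min (margK3 P true) (margK3 P false))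
        * mindisc (pairIK P)
      ≤ min (margJ3 P true) (margJ3 P false) := by

  -- Abbreviations
  have hKt := hK true; have hKf := hK false
  have hJt := hJ true; have hJf := hJ false
  -- the joint factorizes through j
  have hPdiv : ∀ x y z, P x y z = pairIJ P x y * pairJK P y z / margJ3 P y := by
    intro x y z
    exact (eq_div_iff (hJ y).ne').mpr (hmarkov x y z)
  have hIK : ∀ x z, pairIK P x z
      = pairIJ P x true * pairJK P true z / margJ3 P true
        + pairIJ P x false * pairJK P false z / margJ3 P false := by
    intro x z
    rw [pairIK, Fintype.sum_bool, hPdiv x true z, hPdiv x false z]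
  -- marginal decompositions
  have hJIJ : ∀ y, margJ3 P y = pairIJ P true y + pairIJ P false y := by
    intro y; simp only [margJ3, pairIJ, Fintype.sum_bool]
  have hJJK : ∀ y, margJ3 P y = pairJK P y true + pairJK P y false := by
    intro y; simp only [margJ3, pairJK, Fintype.sum_bool]; ring
  have hKJK : ∀ z, margK3 P z = pairJK P true z + pairJK P false z := by
    intro z; simp only [margK3, pairJK, Fintype.sum_bool]; ring
  have hmarg2 : ∀ z, marg2 (pairIK P) z = margK3 P z := by
    intro z; simp only [marg2, pairIK, margK3, Fintype.sum_bool]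
  have hpIJ : ∀ x y, 0 ≤ pairIJ P x y := by
    intro x y; simp only [pairIJ, Fintype.sum_bool]
    have := hnn x y true; have := hnn x y false; linarith
  have hpJK : ∀ y z, 0 ≤ pairJK P y z := by
    intro y z; simp only [pairJK, Fintype.sum_bool]
    have := hnn true y z; have := hnn false y z; linarith
  -- key factorization of the discrepancy
  set c : ℝ := pairJK P true true / margK3 P true - pairJK P true false / margK3 P false
    with hc
  have key : pairIK P true true / margK3 P true - pairIK P true false / margK3 P false
      = (pairIJ P true true / margJ3 P true - pairIJ P true false / margJ3 P false) * c := by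
    have e1 : pairJK P false true = margK3 P true - pairJK P true true := by
      linarith [hKJK true]
    have e2 : pairJK P false false = margK3 P false - pairJK P true false := by
      linarith [hKJK false]
    rw [hc, hIK true true, hIK true false, e1, e2]
    field_simp
    ring
  -- |a1 - a0| ≤ 1
  have ha1 : pairIJ P true true / margJ3 P true ≤ 1 := by
    rw [div_le_one hJt]; have := hpIJ false true; linarith [hJIJ true]
  have ha0 : pairIJ P true false / margJ3 P false ≤ 1 := by
    rw [div_le_one hJf]; have := hpIJ false false; linarith [hJIJ false]
  have ha1' : 0 ≤ pairIJ P true true / margJ3 P true := div_nonneg (hpIJ _ _) hJt.le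
  have ha0' : 0 ≤ pairIJ P true false / margJ3 P false := div_nonneg (hpIJ _ _) hJf.le
  have habs : |pairIJ P true true / margJ3 P true - pairIJ P true false / margJ3 P false| ≤ 1 := by
    rw [abs_le]; constructor <;> linarith
  -- generic bound : minK * |p/Kt - q/Kf| ≤ B when 0 ≤ p,q ≤ B
  have hmK : 0 ≤ min (margK3 P true) (margK3 P false) := le_min hKt.le hKf.le
  have hgen : ∀ p q B : ℝ, 0 ≤ p → 0 ≤ q → p ≤ B → q ≤ B →
      min (margK3 P true) (margK3 P false) * |p / margK3 P true - q / margK3 P false| ≤ B := by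
    intro p q B hp hq hpB hqB
    have h1 : min (margK3 P true) (margK3 P false) * (p / margK3 P true) ≤ B := by
      calc min (margK3 P true) (margK3 P false) * (p / margK3 P true)
          ≤ margK3 P true * (p / margK3 P true) :=
            mul_le_mul_of_nonneg_right (min_le_left _ _) (div_nonneg hp hKt.le)
        _ = p := by field_simp
        _ ≤ B := hpB
    have h2 : min (margK3 P true) (margK3 P false) * (q / margK3 P false) ≤ B := by
      calc min (margK3 P true) (margK3 P false) * (q / margK3 P false)
          ≤ margK3 P false * (q / margK3 P false) :=
            mul_le_mul_of_nonneg_right (min_le_right _ _) (div_nonneg hq hKf.le)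
        _ = q := by field_simp
        _ ≤ B := hqB
    have hdp : (0:ℝ) ≤ p / margK3 P true := div_nonneg hp hKt.le
    have hdq : (0:ℝ) ≤ q / margK3 P false := div_nonneg hq hKf.le
    rcases abs_cases (p / margK3 P true - q / margK3 P false) with ⟨he, _⟩ | ⟨he, _⟩ <;>
      rw [he] <;> nlinarith
  -- minK * |c| ≤ min Jt Jf
  have hcJt : min (margK3 P true) (margK3 P false) * |c| ≤ margJ3 P true := by
    apply hgen _ _ _ (hpJK true true) (hpJK true false)
    · have := hpJK true false; linarith [hJJK true]
    · have := hpJK true true; linarith [hJJK true]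
  have hcJf : min (margK3 P true) (margK3 P false) * |c| ≤ margJ3 P false := by
    have hc' : |c| = |pairJK P false true / margK3 P true
        - pairJK P false false / margK3 P false| := by
      have e1 : pairJK P false true = margK3 P true - pairJK P true true := by
        linarith [hKJK true]
      have e2 : pairJK P false false = margK3 P false - pairJK P true false := by
        linarith [hKJK false]
      rw [hc, e1, e2, ← abs_neg]
      congr 1
      field_simp
      ring
    rw [hc']
    apply hgen _ _ _ (hpJK false true) (hpJK false false)
    · have := hpJK false false; linarith [hJJK false]
    · have := hpJK false true; linarith [hJJK false]
  have hcmin : min (margK3 P true) (margK3 P false) * |c|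
      ≤ min (margJ3 P true) (margJ3 P false) := le_min hcJt hcJf
  -- mindisc ≤ |first discrepancy| = |a1-a0| * |c| ≤ |c|
  have hmd0 : 0 ≤ mindisc (pairIK P) := le_min (abs_nonneg _) (abs_nonneg _)
  have hmd : mindisc (pairIK P) ≤ |c| := by
    have h1 : mindisc (pairIK P)
        ≤ |pairIK P true true / marg2 (pairIK P) true
            - pairIK P true false / marg2 (pairIK P) false| := min_le_left _ _
    rw [hmarg2 true, hmarg2 false, key, abs_mul] at h1
    refine h1.trans ?_
    nlinarith [abs_nonneg c]
  calc min (min (margI3 P true) (margI3 P false)) (min (margK3 P true) (margK3 P false))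
        * mindisc (pairIK P)
      ≤ min (margK3 P true) (margK3 P false) * mindisc (pairIK P) :=
        mul_le_mul_of_nonneg_right (min_le_right _ _) hmd0
    _ ≤ min (margK3 P true) (margK3 P false) * |c| :=
        mul_le_mul_of_nonneg_left hmd hmK
    _ ≤ min (margJ3 P true) (margJ3 P false) := hcmin
end

section
/- Let X_i, X_j, X_k be binary {1,-1}-valued variables forming a Markov chain in the order i, j, k. Then minmrg(P_j) ≥ (1/2)·I_{H²}(P_{ik}). -/
private lemma cube_bound (t : ℝ) (h0 : 0 ≤ t) (h1 : t ≤ 1) :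
    1 - t * Real.sqrt t ≤ 2 * (1 - t) := by
  set s := Real.sqrt t with hs
  have hs2 : s ^ 2 = t := Real.sq_sqrt h0
  have hs1 : s ≤ 1 := Real.sqrt_le_one.2 h1
  have hs0 : 0 ≤ s := Real.sqrt_nonneg t
  nlinarith [mul_nonneg (sub_nonneg.2 hs1) (show (0:ℝ) ≤ 1 + s - s ^ 2 by nlinarith)]

private lemma term_bound (P : Bool → Bool → Bool → ℝ) (hnn : ∀ x y z, 0 ≤ P x y z)
    (hmarkov : IsMarkovIJK P) (y0 x z : Bool) :
    P x y0 z * Real.sqrt (margJ3 P y0) ≤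
      Real.sqrt (marg1 (pairIK P) x * marg2 (pairIK P) z * pairIK P x z) := by
  have h1 : pairIJ P x y0 ≤ marg1 (pairIK P) x := by
    cases y0 <;>
      simp [pairIJ, marg1, pairIK] <;>
      linarith [hnn x true true, hnn x true false, hnn x false true, hnn x false false]
  have h2 : pairJK P y0 z ≤ marg2 (pairIK P) z := by
    cases y0 <;>
      simp [pairJK, marg2, pairIK] <;>
      linarith [hnn true true z, hnn true false z, hnn false true z, hnn false false z]
  have h3 : P x y0 z ≤ pairIK P x z := by
    cases y0 <;> simp [pairIK] <;> linarith [hnn x true z, hnn x false z]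
  have hIJnn : 0 ≤ pairIJ P x y0 := by
    simp only [pairIJ, Fintype.sum_bool]; linarith [hnn x y0 true, hnn x y0 false]
  have hJKnn : 0 ≤ pairJK P y0 z := by
    simp only [pairJK, Fintype.sum_bool]; linarith [hnn true y0 z, hnn false y0 z]
  have hPnn := hnn x y0 z
  calc P x y0 z * Real.sqrt (margJ3 P y0)
      = Real.sqrt (P x y0 z ^ 2) * Real.sqrt (margJ3 P y0) := by
        rw [Real.sqrt_sq hPnn]
    _ = Real.sqrt (P x y0 z * margJ3 P y0 * P x y0 z) := by
        rw [← Real.sqrt_mul (sq_nonneg _)]; ring_nf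
    _ = Real.sqrt (pairIJ P x y0 * pairJK P y0 z * P x y0 z) := by
        rw [hmarkov x y0 z]
    _ ≤ Real.sqrt (marg1 (pairIK P) x * marg2 (pairIK P) z * pairIK P x z) := by
        apply Real.sqrt_le_sqrt
        have := mul_le_mul (mul_le_mul h1 h2 hJKnn (le_trans hIJnn h1)) h3 hPnn
          (mul_nonneg (le_trans hIJnn h1) (le_trans hJKnn h2))
        exact this

private lemma aux_bound (P : Bool → Bool → Bool → ℝ)
    (hnn : ∀ x y z, 0 ≤ P x y z)
    (hsum : ∑ x : Bool, ∑ y : Bool, ∑ z : Bool, P x y z = 1)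
    (hmarkov : IsMarkovIJK P) (y0 : Bool) :
    (1/2) * ih2 (pairIK P) ≤ margJ3 P (!y0) := by
  have hmJnn : ∀ y, 0 ≤ margJ3 P y := by
    intro y; simp only [margJ3, Fintype.sum_bool]
    linarith [hnn true y true, hnn true y false, hnn false y true, hnn false y false]
  have hone : margJ3 P true + margJ3 P false = 1 := by
    simp only [margJ3, Fintype.sum_bool] at *
    linarith [hsum]
  have hle1 : margJ3 P y0 ≤ 1 := by
    cases y0 <;> linarith [hmJnn true, hmJnn false]
  have hSsum : margJ3 P y0 * Real.sqrt (margJ3 P y0)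
      ≤ ∑ x : Bool, ∑ z : Bool,
          Real.sqrt (marg1 (pairIK P) x * marg2 (pairIK P) z * pairIK P x z) := by
    have hrw : margJ3 P y0 * Real.sqrt (margJ3 P y0)
        = ∑ x : Bool, ∑ z : Bool, P x y0 z * Real.sqrt (margJ3 P y0) := by
      simp only [margJ3, Fintype.sum_bool]; ring
    rw [hrw]
    refine Finset.sum_le_sum fun x _ => Finset.sum_le_sum fun z _ => ?_
    exact term_bound P hnn hmarkov y0 x z
  have hcube := cube_bound (margJ3 P y0) (hmJnn y0) hle1
  have h2 : margJ3 P (!y0) = 1 - margJ3 P y0 := by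
    cases y0 <;> simp <;> linarith
  rw [ih2, h2]
  linarith

/-- Along a Markov chain `i, j, k`, the middle node's minimum marginal probability is at
least half of `I_{H²}(P_{ik})`. -/
theorem minmrg_middle_ge_half_ih2 (P : Bool → Bool → Bool → ℝ)
    (hnn : ∀ x y z, 0 ≤ P x y z)
    (hsum : ∑ x : Bool, ∑ y : Bool, ∑ z : Bool, P x y z = 1)
    (hmarkov : IsMarkovIJK P) :
    (1/2) * ih2 (pairIK P) ≤ min (margJ3 P true) (margJ3 P false) := by
  refine le_min ?_ ?_
  · simpa using aux_bound P hnn hsum hmarkov false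
  · simpa using aux_bound P hnn hsum hmarkov true
end

section
/- Let P be a joint distribution on (X_i, X_j, X_k) ∈ {1,-1}³ forming a Markov chain in order i, j, k, and let Q be the Markov chain in order i, k, j whose pairwise marginals for (i,k) and (j,k) agree with those of P. Then H²(P, Q) ≥ (1/100)·mindisc(P_{ij})²·min{minmrg(P_j), mindiag(P_{jk})}. -/

lemma hell_pt (u v : ℝ) (hu0 : 0 ≤ u) (hu1 : u ≤ 1) (hv0 : 0 ≤ v) (hv1 : v ≤ 1) :
    (u - v)^2 ≤ (Real.sqrt u - Real.sqrt v)^2 + (Real.sqrt (1-u) - Real.sqrt (1-v))^2 := by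
  set A := Real.sqrt u with hAdef
  set B := Real.sqrt v with hBdef
  set C := Real.sqrt (1-u) with hCdef
  set D := Real.sqrt (1-v) with hDdef
  have hA : A^2 = u := Real.sq_sqrt hu0
  have hB : B^2 = v := Real.sq_sqrt hv0
  have hC : C^2 = 1-u := Real.sq_sqrt (by linarith)
  have hD : D^2 = 1-v := Real.sq_sqrt (by linarith)
  have hA0 : 0 ≤ A := Real.sqrt_nonneg _
  have hB0 : 0 ≤ B := Real.sqrt_nonneg _
  have hC0 : 0 ≤ C := Real.sqrt_nonneg _
  have hD0 : 0 ≤ D := Real.sqrt_nonneg _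
  have key2 : (A+B)*(C+D) ≤ 2 := by
    nlinarith [sq_nonneg (A-C), sq_nonneg (B-D), sq_nonneg (A-D), sq_nonneg (B-C)]
  have hfac : (u-v)^2 = ((A-B)*(D-C)) * ((A+B)*(C+D)) := by
    have h1 : (A-B)*(A+B) = u - v := by rw [← hA, ← hB]; ring
    have h2 : (D-C)*(D+C) = u - v := by
      have : u - v = (1-v) - (1-u) := by ring
      rw [this, ← hC, ← hD]; ring
    calc (u-v)^2 = ((A-B)*(A+B)) * ((D-C)*(D+C)) := by rw [h1, h2]; ring
      _ = ((A-B)*(D-C)) * ((A+B)*(C+D)) := by ring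
  rcases le_or_gt ((A-B)*(D-C)) 0 with hT | hT
  · have hS : 0 ≤ (A+B)*(C+D) := mul_nonneg (by linarith) (by linarith)
    have hle : (u-v)^2 ≤ 0 := by
      rw [hfac]; exact mul_nonpos_iff.mpr (Or.inr ⟨hT, hS⟩)
    nlinarith [sq_nonneg (A-B), sq_nonneg (C-D)]
  · have h2T : 2*((A-B)*(D-C)) ≤ (A-B)^2 + (C-D)^2 := by nlinarith [sq_nonneg ((A-B)-(D-C))]
    have h3 : ((A-B)*(D-C)) * ((A+B)*(C+D)) ≤ ((A-B)*(D-C)) * 2 :=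
      mul_le_mul_of_nonneg_left key2 hT.le
    rw [hfac]; linarith

lemma group_bd (w m k e g s t' : ℝ) (hw : 0 ≤ w) (hm : 0 < m) (hk : 0 < k)
    (he : 0 ≤ e) (hg : 0 ≤ g) (hs : 0 ≤ s) (ht : 0 ≤ t')
    (hem : e + g = m) (hsk : s + t' = k) :
    w * (e/m - s/k)^2 ≤ (Real.sqrt (w*(e/m)) - Real.sqrt (w*(s/k)))^2
      + (Real.sqrt (w*(g/m)) - Real.sqrt (w*(t'/k)))^2 := by
  have hgm : g/m = 1 - e/m := by field_simp [hm.ne']; linarith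
  have htk : t'/k = 1 - s/k := by field_simp [hk.ne']; linarith
  have h1 : 0 ≤ e/m := div_nonneg he hm.le
  have h2 : e/m ≤ 1 := by rw [div_le_one hm]; linarith
  have h3 : 0 ≤ s/k := div_nonneg hs hk.le
  have h4 : s/k ≤ 1 := by rw [div_le_one hk]; linarith
  have key := hell_pt (e/m) (s/k) h1 h2 h3 h4
  have hw2 : (Real.sqrt w)^2 = w := Real.sq_sqrt hw
  rw [hgm, htk, Real.sqrt_mul hw, Real.sqrt_mul hw, Real.sqrt_mul hw, Real.sqrt_mul hw]
  calc w * (e/m - s/k)^2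
      ≤ w * ((Real.sqrt (e/m) - Real.sqrt (s/k))^2
          + (Real.sqrt (1-e/m) - Real.sqrt (1-s/k))^2) := mul_le_mul_of_nonneg_left key hw
    _ = (Real.sqrt w * Real.sqrt (e/m) - Real.sqrt w * Real.sqrt (s/k))^2
          + (Real.sqrt w * Real.sqrt (1-e/m) - Real.sqrt w * Real.sqrt (1-s/k))^2 := by
        linear_combination (-((Real.sqrt (e/m) - Real.sqrt (s/k))^2
          + (Real.sqrt (1-e/m) - Real.sqrt (1-s/k))^2)) * hw2


lemma final_alg (a b c d p q D r1 r0 : ℝ) (ha : 0 ≤ a) (hb : 0 ≤ b) (hc : 0 ≤ c) (hd : 0 ≤ d)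
    (hkt : 0 < a + c) (hkf : 0 < b + d) (hD0 : 0 ≤ D) (hD : D ≤ |p - q|)
    (hr1 : r1 * (a + c) = a * p + c * q) (hr0 : r0 * (b + d) = b * p + d * q) :
    (1/100) * D^2 * min (min (a+b) (c+d)) (min (a+d) (b+c)) ≤
      (1/2) * (a*(p - r1)^2 + c*(q - r1)^2 + b*(p - r0)^2 + d*(q - r0)^2) := by
  have h1 : r1 = (a*p + c*q)/(a+c) := by rw [eq_div_iff hkt.ne']; exact hr1
  have h0 : r0 = (b*p + d*q)/(b+d) := by rw [eq_div_iff hkf.ne']; exact hr0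
  subst h1; subst h0
  have e1 : a*(p - (a*p + c*q)/(a+c))^2 + c*(q - (a*p + c*q)/(a+c))^2
      = (p-q)^2 * (a*c/(a+c)) := by field_simp; ring
  have e0 : b*(p - (b*p + d*q)/(b+d))^2 + d*(q - (b*p + d*q)/(b+d))^2
      = (p-q)^2 * (b*d/(b+d)) := by field_simp; ring
  have hD2 : D^2 ≤ (p-q)^2 := by
    have h := sq_le_sq' (by linarith [neg_abs_le (p-q)] : -|p-q| ≤ D) hD
    simpa [sq_abs] using h
  have hM0 : 0 ≤ min (min (a+b) (c+d)) (min (a+d) (b+c)) :=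
    le_min (le_min (by linarith) (by linarith)) (le_min (by linarith) (by linarith))
  have hac : min a c ≤ 2*(a*c/(a+c)) := by
    rw [show 2*(a*c/(a+c)) = 2*(a*c)/(a+c) by ring, le_div_iff₀ hkt]
    rcases le_total a c with h | h
    · rw [min_eq_left h]; nlinarith
    · rw [min_eq_right h]; nlinarith
  have hbd : min b d ≤ 2*(b*d/(b+d)) := by
    rw [show 2*(b*d/(b+d)) = 2*(b*d)/(b+d) by ring, le_div_iff₀ hkf]
    rcases le_total b d with h | h
    · rw [min_eq_left h]; nlinarith
    · rw [min_eq_right h]; nlinarith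
  have hMle : min (min (a+b) (c+d)) (min (a+d) (b+c)) ≤ min a c + min b d := by
    rcases le_total a c with h | h <;> rcases le_total b d with h' | h'
    · calc min (min (a+b) (c+d)) (min (a+d) (b+c)) ≤ min (a+b) (c+d) := min_le_left _ _
        _ ≤ a + b := min_le_left _ _
        _ = min a c + min b d := by rw [min_eq_left h, min_eq_left h']
    · calc min (min (a+b) (c+d)) (min (a+d) (b+c)) ≤ min (a+d) (b+c) := min_le_right _ _
        _ ≤ a + d := min_le_left _ _
        _ = min a c + min b d := by rw [min_eq_left h, min_eq_right h']
    · calc min (min (a+b) (c+d)) (min (a+d) (b+c)) ≤ min (a+d) (b+c) := min_le_right _ _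
        _ ≤ b + c := min_le_right _ _
        _ = min a c + min b d := by rw [min_eq_right h, min_eq_left h']; ring
    · calc min (min (a+b) (c+d)) (min (a+d) (b+c)) ≤ min (a+b) (c+d) := min_le_left _ _
        _ ≤ c + d := min_le_right _ _
        _ = min a c + min b d := by rw [min_eq_right h, min_eq_right h']
  set M := min (min (a+b) (c+d)) (min (a+d) (b+c)) with hMdef
  have hq2 : (0:ℝ) ≤ (p-q)^2 := sq_nonneg _
  have step1 : D^2 * M ≤ (p-q)^2 * M := mul_le_mul_of_nonneg_right hD2 hM0
  have step2 : (p-q)^2 * M ≤ (p-q)^2 * (min a c + min b d) :=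
    mul_le_mul_of_nonneg_left hMle hq2
  have step3 : (p-q)^2 * (min a c + min b d)
      ≤ 2*((p-q)^2 * (a*c/(a+c))) + 2*((p-q)^2 * (b*d/(b+d))) := by
    calc (p-q)^2 * (min a c + min b d)
        ≤ (p-q)^2 * (2*(a*c/(a+c)) + 2*(b*d/(b+d))) :=
          mul_le_mul_of_nonneg_left (by linarith) hq2
      _ = 2*((p-q)^2 * (a*c/(a+c))) + 2*((p-q)^2 * (b*d/(b+d))) := by ring
  have hDM0 : 0 ≤ D^2 * M := mul_nonneg (sq_nonneg _) hM0
  linarith [e1, e0, step1, step2, step3, hDM0]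

/-- Lower bound on the squared Hellinger distance between the true Markov chain `P` (in
the order `i,j,k`) and the alternative chain `Q` (in the order `i,k,j` with the same
pairwise marginals on `(i,k)` and `(j,k)`, i.e., `Q(x,y,z) = P_{jk}(y,z)·P_{i|k}(x|z)`):
`H²(P,Q) ≥ (1/100)·mindisc(P_{ij})²·min(minmrg(P_j), mindiag(P_{jk}))`. -/
theorem hellinger_wrong_edge_lower (P : Bool → Bool → Bool → ℝ)
    (hnn : ∀ x y z, 0 ≤ P x y z)
    (hsum : ∑ x : Bool, ∑ y : Bool, ∑ z : Bool, P x y z = 1)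
    (hmarkov : IsMarkovIJK P)
    (hI : ∀ x, 0 < margI3 P x) (hJ : ∀ y, 0 < margJ3 P y) (hK : ∀ z, 0 < margK3 P z) :
    (1/100) * (mindisc (pairIJ P))^2
        * min (min (margJ3 P true) (margJ3 P false)) (mindiag (pairJK P))
      ≤ (1/2) * ∑ x : Bool, ∑ y : Bool, ∑ z : Bool,
          (Real.sqrt (P x y z)
            - Real.sqrt (pairJK P y z * (pairIK P x z / margK3 P z)))^2 := by
  have hP : ∀ x y z, P x y z = pairJK P y z * (pairIJ P x y / margJ3 P y) := by
    intro x y z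
    have h := hmarkov x y z
    have hden := (hJ y).ne'
    have h2 : P x y z = pairIJ P x y * pairJK P y z / margJ3 P y := by
      rw [eq_div_iff hden]; linarith
    rw [h2]; ring
  have hJKnn : ∀ y z, 0 ≤ pairJK P y z := by
    intro y z
    exact Finset.sum_nonneg fun x _ => hnn x y z
  have hIJnn : ∀ x y, 0 ≤ pairIJ P x y := by
    intro x y
    exact Finset.sum_nonneg fun z _ => hnn x y z
  have hIKnn : ∀ x z, 0 ≤ pairIK P x z := by
    intro x z
    exact Finset.sum_nonneg fun y _ => hnn x y z
  have hJm : ∀ y, pairIJ P true y + pairIJ P false y = margJ3 P y := by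
    intro y; simp only [pairIJ, margJ3, Fintype.sum_bool]
  have hKm : ∀ z, pairIK P true z + pairIK P false z = margK3 P z := by
    intro z; simp only [pairIK, margK3, Fintype.sum_bool]
  have hJw : ∀ y, margJ3 P y = pairJK P y true + pairJK P y false := by
    intro y; simp only [pairJK, margJ3, Fintype.sum_bool]; ring
  have hKw : ∀ z, margK3 P z = pairJK P true z + pairJK P false z := by
    intro z; simp only [pairJK, margK3, Fintype.sum_bool]; ring
  have hIK : ∀ x z, pairIK P x z
      = pairJK P true z * (pairIJ P x true / margJ3 P true)
        + pairJK P false z * (pairIJ P x false / margJ3 P false) := by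
    intro x z
    have h0 : pairIK P x z = P x true z + P x false z := by
      simp only [pairIK, Fintype.sum_bool]
    rw [h0, hP x true z, hP x false z]
  have G : ∀ y z, pairJK P y z * (pairIJ P true y / margJ3 P y - pairIK P true z / margK3 P z)^2
      ≤ (Real.sqrt (pairJK P y z * (pairIJ P true y / margJ3 P y))
          - Real.sqrt (pairJK P y z * (pairIK P true z / margK3 P z)))^2
        + (Real.sqrt (pairJK P y z * (pairIJ P false y / margJ3 P y))
          - Real.sqrt (pairJK P y z * (pairIK P false z / margK3 P z)))^2 := by
    intro y z
    exact group_bd _ _ _ _ _ _ _ (hJKnn y z) (hJ y) (hK z) (hIJnn true y) (hIJnn false y)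
      (hIKnn true z) (hIKnn false z) (hJm y) (hKm z)
  have hkt : 0 < pairJK P true true + pairJK P false true := by
    have h := hK true; rw [hKw true] at h; exact h
  have hkf : 0 < pairJK P true false + pairJK P false false := by
    have h := hK false; rw [hKw false] at h; exact h
  have hD0 : 0 ≤ mindisc (pairIJ P) := le_min (abs_nonneg _) (abs_nonneg _)
  have hm2 : ∀ y, marg2 (pairIJ P) y = margJ3 P y := by
    intro y; simp only [marg2, pairIJ, margJ3, Fintype.sum_bool]
  have hD : mindisc (pairIJ P)
      ≤ |pairIJ P true true / margJ3 P true - pairIJ P true false / margJ3 P false| := by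
    calc mindisc (pairIJ P)
        ≤ |pairIJ P true true / marg2 (pairIJ P) true
            - pairIJ P true false / marg2 (pairIJ P) false| := min_le_left _ _
      _ = _ := by rw [hm2 true, hm2 false]
  have hr1 : (pairIK P true true / margK3 P true) * (pairJK P true true + pairJK P false true)
      = pairJK P true true * (pairIJ P true true / margJ3 P true)
        + pairJK P false true * (pairIJ P true false / margJ3 P false) := by
    rw [← hKw true, div_mul_cancel₀ _ (hK true).ne']
    exact hIK true true
  have hr0 : (pairIK P true false / margK3 P false) * (pairJK P true false + pairJK P false false)
      = pairJK P true false * (pairIJ P true true / margJ3 P true)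
        + pairJK P false false * (pairIJ P true false / margJ3 P false) := by
    rw [← hKw false, div_mul_cancel₀ _ (hK false).ne']
    exact hIK true false
  have FIN := final_alg (pairJK P true true) (pairJK P true false) (pairJK P false true)
      (pairJK P false false)
      (pairIJ P true true / margJ3 P true) (pairIJ P true false / margJ3 P false)
      (mindisc (pairIJ P)) (pairIK P true true / margK3 P true)
      (pairIK P true false / margK3 P false)
      (hJKnn true true) (hJKnn true false) (hJKnn false true) (hJKnn false false)
      hkt hkf hD0 hD hr1 hr0
  have hmd : mindiag (pairJK P)
      = min (pairJK P true true + pairJK P false false)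
            (pairJK P true false + pairJK P false true) := rfl
  rw [← hJw true, ← hJw false, ← hmd] at FIN
  simp only [Fintype.sum_bool]
  simp only [hP]
  linarith [G true true, G true false, G false true, G false false, FIN]
end
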